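/- Let w ∈ ℂ² be a unit vector. Then max_{x∈{0,1}} |⟨x|w⟩|² + max_{x∈{0,1}} |⟨x|Hw⟩|² ≤ 1 + 1/√2. Equivalently, the bias of the outcome of measuring w in the computational basis plus the bias of the outcome of measuring w in the Hadamard basis is at most √2. -/

import Mathlib

/-- The 2×2 Hadamard matrix `(1/√2)·[[1,1],[1,-1]]`. -/
noncomputable def Hmat : Matrix (Fin 2) (Fin 2) ℂ :=
  ((1 / Real.sqrt 2 : ℝ) : ℂ) • !![1, 1; 1, -1]

/-!
Since `max a b = (a + b + |b - a|) / 2`, each maximum is half the total probability plus half the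
bias. For `w = (x, y)` the computational-basis bias is `‖y‖² - ‖x‖²` and the Hadamard-basis bias
is `2⟪x, y⟫`; by Cauchy–Schwarz the vector of the two biases has length at most
`‖x‖² + ‖y‖² = 1`, so the sum of their absolute values is at most `√2`.
-/

open Real Matrix

theorem two_mul_max_eq_add_add_abs_sub (a b : ℝ) : 2 * max a b = a + b + |b - a| := by
  linarith [max_sub_min_eq_abs a b, min_add_max a b]

theorem abs_add_abs_le_sqrt_two_mul {u v s : ℝ} (hs : 0 ≤ s) (h : u ^ 2 + v ^ 2 ≤ s ^ 2) :
    |u| + |v| ≤ √2 * s := by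
  refine abs_le_of_sq_le_sq' ?_ (by positivity) |>.2
  rw [mul_pow, sq_sqrt zero_le_two]
  nlinarith [sq_nonneg (|u| - |v|), sq_abs u, sq_abs v]

section InnerProductSpace

variable {F : Type*} [NormedAddCommGroup F] [InnerProductSpace ℝ F]

theorem sq_sub_sq_add_sq_two_inner_le (x y : F) :
    (‖y‖ ^ 2 - ‖x‖ ^ 2) ^ 2 + (2 * inner ℝ x y) ^ 2 ≤ (‖x‖ ^ 2 + ‖y‖ ^ 2) ^ 2 := by
  have hinner : inner ℝ x y ^ 2 ≤ (‖x‖ * ‖y‖) ^ 2 :=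
    sq_le_sq' (abs_le.1 (abs_real_inner_le_norm x y)).1 (abs_le.1 (abs_real_inner_le_norm x y)).2
  nlinarith

theorem max_sq_norm_add_max_sq_norm_add_sub_le (x y : F) :
    max (‖x‖ ^ 2) (‖y‖ ^ 2) + max (‖x + y‖ ^ 2 / 2) (‖x - y‖ ^ 2 / 2)
      ≤ (1 + 1 / √2) * (‖x‖ ^ 2 + ‖y‖ ^ 2) := by
  have hbias := abs_add_abs_le_sqrt_two_mul (by positivity) (sq_sub_sq_add_sq_two_inner_le x y)
  have hmax₁ := two_mul_max_eq_add_add_abs_sub (‖x‖ ^ 2) (‖y‖ ^ 2)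
  have hmax₂ := two_mul_max_eq_add_add_abs_sub (‖x + y‖ ^ 2 / 2) (‖x - y‖ ^ 2 / 2)
  have hdiff : ‖x - y‖ ^ 2 / 2 - ‖x + y‖ ^ 2 / 2 = -(2 * inner ℝ x y) := by
    rw [norm_add_sq_real, norm_sub_sq_real]; ring
  have hsum : ‖x + y‖ ^ 2 / 2 + ‖x - y‖ ^ 2 / 2 = ‖x‖ ^ 2 + ‖y‖ ^ 2 := by
    rw [norm_add_sq_real, norm_sub_sq_real]; ring
  rw [hdiff, abs_neg, hsum] at hmax₂
  have hsqrt : 1 / √2 = √2 / 2 := by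
    field_simp
    rw [sq_sqrt zero_le_two]
  rw [hsqrt]
  linarith

end InnerProductSpace

theorem Hmat_mulVec_apply_zero (w : Fin 2 → ℂ) :
    (Hmat *ᵥ w) 0 = ((1 / √2 : ℝ) : ℂ) * (w 0 + w 1) := by
  simp [Hmat, mulVec, dotProduct, mul_add]

theorem Hmat_mulVec_apply_one (w : Fin 2 → ℂ) :
    (Hmat *ᵥ w) 1 = ((1 / √2 : ℝ) : ℂ) * (w 0 - w 1) := by
  simp [Hmat, mulVec, dotProduct, mul_add, sub_eq_add_neg]

theorem norm_ofReal_inv_sqrt_two_mul_sq (z : ℂ) : ‖((1 / √2 : ℝ) : ℂ) * z‖ ^ 2 = ‖z‖ ^ 2 / 2 := by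
  rw [norm_mul, mul_pow, Complex.norm_real, norm_div, norm_one, Real.norm_of_nonneg (sqrt_nonneg 2),
    div_pow, sq_sqrt zero_le_two]
  ring

/-- For any unit vector `w ∈ ℂ²`,
`max_x |⟨x|w⟩|² + max_x |⟨x|Hw⟩|² ≤ 1 + 1/√2`, i.e. the sum of the maximal outcome
probabilities of measuring `w` in the computational and in the Hadamard basis is at
most `1 + 1/√2`. -/
theorem stmt9 (w : Fin 2 → ℂ) (hw : ‖w 0‖ ^ 2 + ‖w 1‖ ^ 2 = 1) :
    max (‖w 0‖ ^ 2) (‖w 1‖ ^ 2)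
      + max (‖Hmat.mulVec w 0‖ ^ 2) (‖Hmat.mulVec w 1‖ ^ 2)
      ≤ 1 + 1 / Real.sqrt 2 := by
  rw [Hmat_mulVec_apply_zero, Hmat_mulVec_apply_one, norm_ofReal_inv_sqrt_two_mul_sq,
    norm_ofReal_inv_sqrt_two_mul_sq]
  simpa [hw] using max_sq_norm_add_max_sq_norm_add_sub_le (w 0) (w 1)
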